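/- With the setup of the full and reduced preconditioners K = V D V* (D = (I+Λ)^{-1}, Λ ≥ 0 with tail eigenvalues bounded by λ_{r+1}) and K̂ = I + V_r(D_r − I_r)V_r*, and the dimension-reduced MALA proposal v' = (I − ρ₁K)v − ρ₁K s(γ)∇Φ(v) + ρ₂ K^{1/2} ξ, the difference between the dimension-reduced proposal (using K̂) with γ_⊥ = 1 and the full proposal satisfies ‖v'_{DR} − v'_{full}‖ ≤ ρ₁ · λ_{r+1}/(λ_{r+1}+1) · (‖v‖ + ‖∇Φ(v)‖) + ρ₂ · λ_{r+1}/(λ_{r+1}+1+√(λ_{r+1}+1)) · ‖ξ‖. -/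

import Mathlib

/-! Since `Vr Vr† + Vp Vp† = 1`, both `K̂ - K` and `K̂^{1/2} - K^{1/2}` have the form
`Vp (1 - A) Vp†` with `A = Dp` resp. `A = Sp`, and `Vp` is an isometry, so it suffices to bound
`‖1 - Dp‖` and `‖1 - Sp‖`. For `y = Dp x` we have `(1 - Dp) x = Λp y` and `x = y + Λp y`, and the
inequality `‖Λ y‖² ≤ ‖Λ‖ ⟪Λ y, y⟫` for positive `Λ` gives `(λ + 1) ‖(1 - Dp) x‖ ≤ λ ‖x‖`.
For the square root, `(1 + Sp)(1 - Sp) = 1 - Dp`, and `Sp ≥ 1 / √(λ + 1)` because the inverse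
`Sp (1 + Λp)` of `Sp` is positive with square `1 + Λp`; this yields the extra factor
`√(λ + 1) / (√(λ + 1) + 1)`. -/

open ContinuousLinearMap
open scoped InnerProductSpace

theorem IsSelfAdjoint.of_mul_eq_one {M : Type*} [Monoid M] [StarMul M] {s x : M}
    (hs : IsSelfAdjoint s) (h : s * x = 1) : IsSelfAdjoint x := by
  have hleft : star x * s = 1 := by rw [← hs.star_eq, ← star_mul, h, star_one]
  exact left_inv_eq_right_inv hleft h

theorem add_one_mul_norm_le_mul_norm_add {E : Type*} [NormedAddCommGroup E]
    [InnerProductSpace ℝ E] {a b : E} {c : ℝ} (hc : 0 ≤ c)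
    (h : ‖a‖ ^ 2 ≤ c * ⟪a, b⟫_ℝ) : (c + 1) * ‖a‖ ≤ c * ‖a + b‖ := by
  rcases eq_or_ne a 0 with rfl | ha
  · simp; positivity
  have key : (c + 1) * ‖a‖ * ‖a‖ ≤ c * ‖a + b‖ * ‖a‖ :=
    calc (c + 1) * ‖a‖ * ‖a‖ ≤ c * ⟪a, a + b⟫_ℝ := by
          rw [inner_add_right, real_inner_self_eq_norm_sq]; nlinarith
      _ ≤ c * (‖a‖ * ‖a + b‖) := by gcongr; exact real_inner_le_norm _ _
      _ = c * ‖a + b‖ * ‖a‖ := by ring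
  exact le_of_mul_le_mul_right key (norm_pos_iff.mpr ha)

namespace ContinuousLinearMap

section RCLike

variable {𝕜 E F : Type*} [RCLike 𝕜] [NormedAddCommGroup E] [InnerProductSpace 𝕜 E]
  [CompleteSpace E] [NormedAddCommGroup F] [InnerProductSpace 𝕜 F] [CompleteSpace F]

theorem IsPositive.of_mul_eq_one {S X : E →L[𝕜] E} (hS : S.IsPositive) (h : S * X = 1) :
    X.IsPositive := by
  have hX := hS.isSelfAdjoint.of_mul_eq_one h
  have := hS.adjoint_conj X
  rwa [← star_eq_adjoint, hX.star_eq, ← mul_def, ← mul_def, h, mul_one] at this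

theorem norm_le_one_of_adjoint_comp_self_eq_one {V : F →L[𝕜] E} (hV : adjoint V ∘L V = 1) :
    ‖V‖ ≤ 1 := by
  have h : ‖V‖ * ‖V‖ ≤ 1 := by rw [← norm_adjoint_comp_self, hV]; exact norm_id_le
  nlinarith [norm_nonneg V]

theorem norm_comp_comp_adjoint_le {V : F →L[𝕜] E} (hV : adjoint V ∘L V = 1) (A : F →L[𝕜] F) :
    ‖V ∘L A ∘L adjoint V‖ ≤ ‖A‖ := by
  have hV' := norm_le_one_of_adjoint_comp_self_eq_one hV
  calc ‖V ∘L A ∘L adjoint V‖ ≤ ‖V‖ * (‖A‖ * ‖adjoint V‖) :=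
        (opNorm_comp_le _ _).trans (by gcongr; exact opNorm_comp_le _ _)
    _ ≤ 1 * (‖A‖ * 1) := by
        rw [LinearIsometryEquiv.norm_map]; gcongr
    _ = ‖A‖ := by ring

theorem one_add_conj_sub_one_sub_eq {G : Type*} [NormedAddCommGroup G] [InnerProductSpace 𝕜 G]
    [CompleteSpace G] {Vr : G →L[𝕜] E} {Vp : F →L[𝕜] E}
    (hcompl : Vr ∘L adjoint Vr + Vp ∘L adjoint Vp = 1) (A : G →L[𝕜] G) (B : F →L[𝕜] F) :
    (1 + Vr ∘L (A - 1) ∘L adjoint Vr) - (Vr ∘L A ∘L adjoint Vr + Vp ∘L B ∘L adjoint Vp) =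
      Vp ∘L (1 - B) ∘L adjoint Vp := by
  rw [← hcompl]
  simp only [sub_comp, comp_sub, one_def, id_comp]
  abel

end RCLike

section Real

variable {E : Type*} [NormedAddCommGroup E] [InnerProductSpace ℝ E]

theorem IsPositive.inner_apply_sq_le {T : E →L[ℝ] E} (hT : T.IsPositive) (x y : E) :
    ⟪T x, y⟫_ℝ ^ 2 ≤ ⟪T x, x⟫_ℝ * ⟪T y, y⟫_ℝ := by
  have h := LinearMap.BilinForm.apply_mul_apply_le_of_forall_zero_le
    ((innerₗ E).comp (T : E →ₗ[ℝ] E)) hT.inner_nonneg_left x y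
  simp only [LinearMap.comp_apply, coe_coe, innerₗ_apply_apply] at h
  rwa [hT.inner_left_eq_inner_right y x, real_inner_comm (T x) y, ← sq] at h

theorem IsPositive.norm_apply_sq_le {T : E →L[ℝ] E} (hT : T.IsPositive) (x : E) :
    ‖T x‖ ^ 2 ≤ ‖T‖ * ⟪T x, x⟫_ℝ := by
  rcases eq_or_ne (T x) 0 with h0 | h0
  · simp [h0]
  have hcs := hT.inner_apply_sq_le x (T x)
  have hTT : ⟪T (T x), T x⟫_ℝ ≤ ‖T‖ * ‖T x‖ ^ 2 :=
    calc ⟪T (T x), T x⟫_ℝ ≤ ‖T (T x)‖ * ‖T x‖ := real_inner_le_norm _ _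
      _ ≤ ‖T‖ * ‖T x‖ * ‖T x‖ := by gcongr; exact T.le_opNorm _
      _ = ‖T‖ * ‖T x‖ ^ 2 := by ring
  rw [real_inner_self_eq_norm_sq] at hcs
  have hpos : 0 < ‖T x‖ ^ 2 := by positivity
  nlinarith [mul_le_mul_of_nonneg_left hTT (hT.inner_nonneg_left x)]

theorem IsPositive.norm_sq_le_mul_inner_of_comp_eq_one {X S : E →L[ℝ] E} (hX : X.IsPositive)
    (h : X ∘L S = 1) (z : E) : ‖z‖ ^ 2 ≤ ‖X‖ * ⟪z, S z⟫_ℝ := by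
  have hz : X (S z) = z := by simpa using congr($h z)
  simpa [hz] using hX.norm_apply_sq_le (S z)

theorem norm_one_sub_le_of_comp_one_add_eq_one {Λ D : E →L[ℝ] E} {lam : ℝ} (hΛ : Λ.IsPositive)
    (hΛlam : ‖Λ‖ ≤ lam) (hD : (1 + Λ) ∘L D = 1) : ‖1 - D‖ ≤ lam / (lam + 1) := by
  have hlam : 0 ≤ lam := (norm_nonneg Λ).trans hΛlam
  refine opNorm_le_bound _ (by positivity) fun x => ?_
  set y := D x
  have hx : x = Λ y + y := by simpa [add_comm] using congr($hD x).symm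
  have hΛy : ‖Λ y‖ ^ 2 ≤ lam * ⟪Λ y, y⟫_ℝ :=
    (hΛ.norm_apply_sq_le y).trans (by gcongr; exact hΛ.inner_nonneg_left y)
  have key := add_one_mul_norm_le_mul_norm_add hlam hΛy
  rw [← hx] at key
  have hsub : (1 - D) x = Λ y := by
    simp only [sub_apply]; nth_rewrite 1 [hx]; simp [y]
  rw [hsub, div_mul_eq_mul_div, le_div_iff₀ (by positivity)]
  linarith

theorem IsPositive.norm_sq_le_sqrt_mul_inner [CompleteSpace E] {Λ D S : E →L[ℝ] E} {lam : ℝ}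
    (hS : S.IsPositive) (hΛlam : ‖Λ‖ ≤ lam) (hSS : S ∘L S = D) (hD : D ∘L (1 + Λ) = 1) (z : E) :
    ‖z‖ ^ 2 ≤ √(lam + 1) * ⟪z, S z⟫_ℝ := by
  have hlam : 0 ≤ lam := (norm_nonneg Λ).trans hΛlam
  set X := S * (1 + Λ)
  have hSX : S * X = 1 := by
    rw [← mul_assoc, show S * S = D from hSS]; exact hD
  have hX : X.IsPositive := hS.of_mul_eq_one hSX
  have hXS : X * S = 1 := by
    rw [← hX.isSelfAdjoint.star_eq, ← hS.isSelfAdjoint.star_eq, ← star_mul, hSX, star_one]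
  have hXX : X * X = 1 + Λ := by
    rw [show X * X = X * S * (1 + Λ) by simp only [X, mul_assoc], hXS, one_mul]
  have hXnorm : ‖X‖ ≤ √(lam + 1) := by
    rw [Real.le_sqrt (norm_nonneg _) (by linarith), sq, ← CStarRing.norm_star_mul_self,
      hX.isSelfAdjoint.star_eq, hXX, add_comm lam]
    exact (norm_add_le _ _).trans (by gcongr; exact norm_id_le)
  exact (hX.norm_sq_le_mul_inner_of_comp_eq_one hXS z).trans
    (by gcongr; exact hS.inner_nonneg_right z)

theorem norm_one_sub_le_of_comp_self_eq [CompleteSpace E] {Λ D S : E →L[ℝ] E} {lam : ℝ}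
    (hΛ : Λ.IsPositive) (hΛlam : ‖Λ‖ ≤ lam) (hD₁ : D ∘L (1 + Λ) = 1) (hD₂ : (1 + Λ) ∘L D = 1)
    (hS : S.IsPositive) (hSS : S ∘L S = D) :
    ‖1 - S‖ ≤ lam / (lam + 1 + √(lam + 1)) := by
  have hlam : 0 ≤ lam := (norm_nonneg Λ).trans hΛlam
  set s := √(lam + 1)
  have hs : s ^ 2 = lam + 1 := Real.sq_sqrt (by linarith)
  refine opNorm_le_bound _ (by positivity) fun x => ?_
  set w := (1 - S) x
  have hw : w + S w = (1 - D) x := by simp [w, ← hSS]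
  have key := add_one_mul_norm_le_mul_norm_add (Real.sqrt_nonneg _)
    (hS.norm_sq_le_sqrt_mul_inner hΛlam hSS hD₁ w)
  rw [hw] at key
  have hDx : ‖(1 - D) x‖ ≤ lam / (lam + 1) * ‖x‖ :=
    (le_opNorm _ _).trans (by gcongr; exact norm_one_sub_le_of_comp_one_add_eq_one hΛ hΛlam hD₂)
  rw [div_mul_eq_mul_div, le_div_iff₀ (by positivity)] at hDx ⊢
  calc ‖w‖ * (lam + 1 + s) = s * ((s + 1) * ‖w‖) := by rw [← hs]; ring
    _ ≤ s * (s * ‖(1 - D) x‖) := by gcongr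
    _ = ‖(1 - D) x‖ * (lam + 1) := by rw [← hs]; ring
    _ ≤ lam * ‖x‖ := hDx

end Real

end ContinuousLinearMap

theorem stmt10_general
    {H : Type*} [NormedAddCommGroup H] [InnerProductSpace ℝ H] [CompleteSpace H]
    {F : Type*} [NormedAddCommGroup F] [InnerProductSpace ℝ F] [CompleteSpace F]
    {r : ℕ}
    (Vr : EuclideanSpace ℝ (Fin r) →L[ℝ] H) (Vp : F →L[ℝ] H)
    (hVp : (adjoint Vp) ∘L Vp = 1)
    (hcompl : Vr ∘L adjoint Vr + Vp ∘L adjoint Vp = 1)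
    (Dr Sr : EuclideanSpace ℝ (Fin r) →L[ℝ] EuclideanSpace ℝ (Fin r))
    (Λp Dp Sp : F →L[ℝ] F)
    (lam : ℝ) (hlam : 0 ≤ lam)
    (hΛpsa : IsSelfAdjoint Λp) (hΛppos : ∀ x, 0 ≤ (inner ℝ (Λp x) x : ℝ))
    (hΛpnorm : ‖Λp‖ ≤ lam)
    (hDp₁ : Dp ∘L (1 + Λp) = 1) (hDp₂ : (1 + Λp) ∘L Dp = 1)
    (hSpsa : IsSelfAdjoint Sp) (hSppos : ∀ x, 0 ≤ (inner ℝ (Sp x) x : ℝ))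
    (hSp : Sp ∘L Sp = Dp)
    (ρ₁ ρ₂ : ℝ) (hρ₁ : 0 ≤ ρ₁) (hρ₂ : 0 ≤ ρ₂)
    (v g ξ : H)
    (K Khalf Khat Khathalf : H →L[ℝ] H)
    (hK : K = Vr ∘L Dr ∘L adjoint Vr + Vp ∘L Dp ∘L adjoint Vp)
    (hKhalf : Khalf = Vr ∘L Sr ∘L adjoint Vr + Vp ∘L Sp ∘L adjoint Vp)
    (hKhat : Khat = 1 + Vr ∘L (Dr - 1) ∘L adjoint Vr)
    (hKhathalf : Khathalf = 1 + Vr ∘L (Sr - 1) ∘L adjoint Vr)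
    (vfull vdr : H)
    (hvfull : vfull = v - ρ₁ • K v - ρ₁ • K g + ρ₂ • Khalf ξ)
    (hvdr : vdr = v - ρ₁ • Khat v - ρ₁ • Khat g + ρ₂ • Khathalf ξ) :
    ‖vdr - vfull‖ ≤
      ρ₁ * (lam / (lam + 1)) * (‖v‖ + ‖g‖) +
        ρ₂ * (lam / (lam + 1 + Real.sqrt (lam + 1))) * ‖ξ‖ := by
  have hΛ : Λp.IsPositive := (isPositive_iff' Λp).2 ⟨hΛpsa, hΛppos⟩
  have hS : Sp.IsPositive := (isPositive_iff' Sp).2 ⟨hSpsa, hSppos⟩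
  have hdrift : ‖Khat - K‖ ≤ lam / (lam + 1) := by
    rw [hKhat, hK, one_add_conj_sub_one_sub_eq hcompl]
    exact (norm_comp_comp_adjoint_le hVp _).trans
      (norm_one_sub_le_of_comp_one_add_eq_one hΛ hΛpnorm hDp₂)
  have hnoise : ‖Khathalf - Khalf‖ ≤ lam / (lam + 1 + √(lam + 1)) := by
    rw [hKhathalf, hKhalf, one_add_conj_sub_one_sub_eq hcompl]
    exact (norm_comp_comp_adjoint_le hVp _).trans
      (norm_one_sub_le_of_comp_self_eq hΛ hΛpnorm hDp₁ hDp₂ hS hSp)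
  have hdiff : vdr - vfull = ρ₂ • (Khathalf - Khalf) ξ - ρ₁ • (Khat - K) (v + g) := by
    rw [hvdr, hvfull]
    simp only [sub_apply, map_add]
    module
  calc ‖vdr - vfull‖ ≤ ρ₂ * (‖Khathalf - Khalf‖ * ‖ξ‖) + ρ₁ * (‖Khat - K‖ * ‖v + g‖) := by
        rw [hdiff]
        refine (norm_sub_le _ _).trans ?_
        rw [norm_smul, norm_smul, Real.norm_of_nonneg hρ₁, Real.norm_of_nonneg hρ₂]
        gcongr <;> exact le_opNorm _ _
    _ ≤ ρ₂ * (lam / (lam + 1 + √(lam + 1)) * ‖ξ‖) + ρ₁ * (lam / (lam + 1) * (‖v‖ + ‖g‖)) := by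
        gcongr
        exact norm_add_le v g
    _ = _ := by ring

/-- Bound on the difference between the dimension-reduced MALA proposal (with `γ_⊥ = 1`)
using `K̂ = I + Vr(Dr − I)Vr*` and the full proposal using `K = V (I+Λ)⁻¹ V*`:
`‖v'_DR − v'_full‖ ≤ ρ₁ λ/(λ+1) (‖v‖+‖∇Φ(v)‖) + ρ₂ λ/(λ+1+√(λ+1)) ‖ξ‖`,
where `λ = λ_{r+1}` bounds the tail eigenvalues (`‖Λ_⊥‖ ≤ λ`). -/
theorem stmt10
    {H : Type*} [NormedAddCommGroup H] [InnerProductSpace ℝ H] [CompleteSpace H]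
    {F : Type*} [NormedAddCommGroup F] [InnerProductSpace ℝ F] [CompleteSpace F]
    {r : ℕ}
    (Vr : EuclideanSpace ℝ (Fin r) →L[ℝ] H) (Vp : F →L[ℝ] H)
    (hVr : (adjoint Vr) ∘L Vr = 1) (hVp : (adjoint Vp) ∘L Vp = 1)
    (hcompl : Vr ∘L adjoint Vr + Vp ∘L adjoint Vp = 1)
    (horth : (adjoint Vr) ∘L Vp = 0)
    (Λr Dr Sr : EuclideanSpace ℝ (Fin r) →L[ℝ] EuclideanSpace ℝ (Fin r))
    (Λp Dp Sp : F →L[ℝ] F)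
    (lam : ℝ) (hlam : 0 ≤ lam)
    (hΛrsa : IsSelfAdjoint Λr) (hΛrpos : ∀ x, 0 ≤ (inner ℝ (Λr x) x : ℝ))
    (hΛpsa : IsSelfAdjoint Λp) (hΛppos : ∀ x, 0 ≤ (inner ℝ (Λp x) x : ℝ))
    (hΛpnorm : ‖Λp‖ ≤ lam)
    (hDr₁ : Dr ∘L (1 + Λr) = 1) (hDr₂ : (1 + Λr) ∘L Dr = 1)
    (hDp₁ : Dp ∘L (1 + Λp) = 1) (hDp₂ : (1 + Λp) ∘L Dp = 1)
    (hSrsa : IsSelfAdjoint Sr) (hSrpos : ∀ x, 0 ≤ (inner ℝ (Sr x) x : ℝ))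
    (hSr : Sr ∘L Sr = Dr)
    (hSpsa : IsSelfAdjoint Sp) (hSppos : ∀ x, 0 ≤ (inner ℝ (Sp x) x : ℝ))
    (hSp : Sp ∘L Sp = Dp)
    (ρ₁ ρ₂ : ℝ) (hρ₁ : 0 ≤ ρ₁) (hρ₂ : 0 ≤ ρ₂)
    (v g ξ : H)
    (K Khalf Khat Khathalf : H →L[ℝ] H)
    (hK : K = Vr ∘L Dr ∘L adjoint Vr + Vp ∘L Dp ∘L adjoint Vp)
    (hKhalf : Khalf = Vr ∘L Sr ∘L adjoint Vr + Vp ∘L Sp ∘L adjoint Vp)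
    (hKhat : Khat = 1 + Vr ∘L (Dr - 1) ∘L adjoint Vr)
    (hKhathalf : Khathalf = 1 + Vr ∘L (Sr - 1) ∘L adjoint Vr)
    (vfull vdr : H)
    (hvfull : vfull = v - ρ₁ • K v - ρ₁ • K g + ρ₂ • Khalf ξ)
    (hvdr : vdr = v - ρ₁ • Khat v - ρ₁ • Khat g + ρ₂ • Khathalf ξ) :
    ‖vdr - vfull‖ ≤
      ρ₁ * (lam / (lam + 1)) * (‖v‖ + ‖g‖) +
        ρ₂ * (lam / (lam + 1 + Real.sqrt (lam + 1))) * ‖ξ‖ :=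
  stmt10_general Vr Vp hVp hcompl Dr Sr Λp Dp Sp lam hlam hΛpsa hΛppos hΛpnorm hDp₁ hDp₂ hSpsa
    hSppos hSp ρ₁ ρ₂ hρ₁ hρ₂ v g ξ K Khalf Khat Khathalf hK hKhalf hKhat hKhathalf vfull vdr hvfull
    hvdr
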